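/- arXiv:1610.06835 — 4 statements merged into one kernel-verified Lean document; each statement's English description precedes it below -/
import Mathlib

section
/- Let X be an integrable random variable with expected maxima μ_k. Then ∫_0^1 (1−u)^{k−1} F^{-1}(u) du = −(1/k) Σ_{j=1}^k (−1)^j C(k,j) μ_j, and hence Σ_{j=1}^k (−1)^j C(k,j) μ_j = o(k) as k → ∞. -/
/-!
Expanding `(1 - u)^(k-1)` binomially writes `∫₀¹ (1 - u)^(k-1) F⁻¹(u) du` as an alternating
combination of the moments `∫₀¹ u^m F⁻¹(u) du = μ_{m+1} / (m+1)`, and `k · C(k-1, m) = C(k, m+1) · (m+1)`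
turns it into the stated sum. Since `F⁻¹` pushes the uniform distribution on `(0, 1)` forward to the
law of `X`, it is integrable on `(0, 1)`, and dominated convergence gives
`∫₀¹ (1 - u)^(k-1) F⁻¹(u) du → 0`, which is the `o(k)` bound.
-/

open MeasureTheory Set Filter Topology

lemma one_sub_pow_eq_sum {R : Type*} [CommRing R] (x : R) (n : ℕ) :
    (1 - x) ^ n = ∑ m ∈ Finset.range (n + 1), (-1) ^ m * (n.choose m : R) * x ^ m := by
  rw [sub_eq_neg_add, add_pow]
  refine Finset.sum_congr rfl fun m _ => ?_
  rw [neg_pow, one_pow]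
  ring

lemma sum_range_neg_one_pow_choose_mul (a : ℕ → ℝ) (n : ℕ) :
    ∑ m ∈ Finset.range (n + 1), (-1) ^ m * (n.choose m : ℝ) * a m
      = -(1 / ((n + 1 : ℕ) : ℝ)) *
          ∑ j ∈ Finset.Icc 1 (n + 1), (-1) ^ j * ((n + 1).choose j : ℝ) * (j * a (j - 1)) := by
  rw [← Finset.Ico_add_one_right_eq_Icc, Finset.sum_Ico_eq_sum_range, Nat.add_sub_cancel,
    Finset.mul_sum]
  refine Finset.sum_congr rfl fun m _ => ?_
  have hchoose : ((n : ℝ) + 1) * n.choose m = (n + 1).choose (m + 1) * ((m : ℝ) + 1) := by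
    exact_mod_cast Nat.add_one_mul_choose_eq n m
  rw [add_comm 1 m, Nat.add_sub_cancel]
  push_cast
  field_simp
  linear_combination (-1) ^ m * a m * hchoose

section

variable {α : Type*} [MeasurableSpace α] {μ : Measure α} {f g : α → ℝ}

lemma MeasureTheory.Integrable.pow_mul_of_abs_le_one (hf : Integrable f μ)
    (hg : AEStronglyMeasurable g μ) (hg₁ : ∀ᵐ x ∂μ, |g x| ≤ 1) (n : ℕ) :
    Integrable (fun x => g x ^ n * f x) μ :=
  hf.bdd_mul (hg.pow n) (hg₁.mono fun x hx => by
    rw [Real.norm_eq_abs, abs_pow]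
    exact pow_le_one₀ (abs_nonneg _) hx)

lemma integral_one_sub_pow_mul (hint : ∀ m : ℕ, Integrable (fun x => g x ^ m * f x) μ) (n : ℕ) :
    ∫ x, (1 - g x) ^ n * f x ∂μ
      = ∑ m ∈ Finset.range (n + 1), (-1) ^ m * (n.choose m : ℝ) * ∫ x, g x ^ m * f x ∂μ := by
  have hexpand : ∀ x, (1 - g x) ^ n * f x
      = ∑ m ∈ Finset.range (n + 1), (-1) ^ m * (n.choose m : ℝ) * (g x ^ m * f x) := fun x => by
    rw [one_sub_pow_eq_sum, Finset.sum_mul]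
    exact Finset.sum_congr rfl fun _ _ => by ring
  simp_rw [hexpand]
  rw [integral_finsetSum _ fun m _ => (hint m).const_mul _]
  simp_rw [integral_const_mul]

lemma tendsto_integral_pow_mul_of_abs_lt_one (hf : Integrable f μ)
    (hg : AEStronglyMeasurable g μ) (hg₁ : ∀ᵐ x ∂μ, |g x| < 1) :
    Tendsto (fun n : ℕ => ∫ x, g x ^ n * f x ∂μ) atTop (𝓝 0) := by
  have hdom : ∀ n : ℕ, ∀ᵐ x ∂μ, ‖g x ^ n * f x‖ ≤ |f x| := fun n => hg₁.mono fun x hx => by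
    rw [Real.norm_eq_abs, abs_mul, abs_pow]
    exact mul_le_of_le_one_left (abs_nonneg _) (pow_le_one₀ (abs_nonneg _) hx.le)
  have hlim : ∀ᵐ x ∂μ, Tendsto (fun n : ℕ => g x ^ n * f x) atTop (𝓝 0) :=
    hg₁.mono fun x hx => by
      simpa using (tendsto_pow_atTop_nhds_zero_of_abs_lt_one hx).mul_const (f x)
  simpa using tendsto_integral_of_dominated_convergence _
    (fun n => (hg.pow n).mul hf.1) hf.abs hdom hlim

end

lemma volume_restrict_Ioo_zero_one_Iic {c : ℝ} (hc : c ≤ 1) :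
    volume.restrict (Ioo 0 1) (Iic c) = ENNReal.ofReal c := by
  rw [Measure.restrict_congr_set Ioo_ae_eq_Ioc, Measure.restrict_apply measurableSet_Iic,
    inter_comm, Ioc_inter_Iic, min_eq_right hc, Real.volume_Ioc, sub_zero]

namespace ProbabilityTheory

/-- Only meaningful on `(0, 1)`: outside it the set is empty or unbounded below and `sInf` is `0`. -/
noncomputable def quantile (P : Measure ℝ) (u : ℝ) : ℝ := sInf {x | u ≤ cdf P x}

section

variable {P : Measure ℝ} {u : ℝ}

lemma nonempty_setOf_le_cdf (hu : u < 1) : {x | u ≤ cdf P x}.Nonempty :=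
  ((tendsto_cdf_atTop P).eventually (eventually_ge_nhds hu)).exists

lemma bddBelow_setOf_le_cdf (hu : 0 < u) : BddBelow {x | u ≤ cdf P x} := by
  obtain ⟨y, hy⟩ := ((tendsto_cdf_atBot P).eventually (eventually_lt_nhds hu)).exists
  exact ⟨y, fun z hz => not_lt.1 fun hzy => (hz.trans (monotone_cdf P hzy.le)).not_gt hy⟩

lemma quantile_le_iff (hu : u ∈ Ioo 0 1) (x : ℝ) : quantile P u ≤ x ↔ u ≤ cdf P x := by
  refine ⟨fun h => ?_, fun h => csInf_le (bddBelow_setOf_le_cdf hu.1) h⟩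
  have hright : ∀ y, x < y → u ≤ cdf P y := fun y hy => by
    obtain ⟨z, hz, hzy⟩ := exists_lt_of_csInf_lt (nonempty_setOf_le_cdf hu.2) (h.trans_lt hy)
    exact hz.trans (monotone_cdf P hzy.le)
  exact ge_of_tendsto ((cdf P).right_continuous x |>.tendsto.mono_left
    (nhdsWithin_mono x Ioi_subset_Ici_self)) (eventually_nhdsWithin_of_forall hright)

lemma monotoneOn_quantile : MonotoneOn (quantile P) (Ioo 0 1) := fun _ ha _ hb hab =>
  csInf_le_csInf (bddBelow_setOf_le_cdf ha.1) (nonempty_setOf_le_cdf hb.2)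
    fun _ hx => hab.trans hx

lemma aemeasurable_quantile : AEMeasurable (quantile P) (volume.restrict (Ioo 0 1)) :=
  aemeasurable_restrict_of_monotoneOn measurableSet_Ioo monotoneOn_quantile

end

variable {P : Measure ℝ} [IsProbabilityMeasure P]

theorem map_quantile_volume_Ioo : (volume.restrict (Ioo 0 1)).map (quantile P) = P := by
  have : IsProbabilityMeasure (volume.restrict (Ioo (0 : ℝ) 1)) := ⟨by simp⟩
  have := Measure.isProbabilityMeasure_map (aemeasurable_quantile (P := P))
  refine Measure.ext_of_Iic _ _ fun x => ?_
  have hpre : quantile P ⁻¹' Iic x =ᵐ[volume.restrict (Ioo 0 1)] Iic (cdf P x) := by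
    filter_upwards [ae_restrict_mem measurableSet_Ioo] with u hu
    exact propext (quantile_le_iff hu x)
  rw [Measure.map_apply_of_aemeasurable aemeasurable_quantile measurableSet_Iic,
    measure_congr hpre, volume_restrict_Ioo_zero_one_Iic (cdf_le_one P x), ofReal_cdf]

lemma integrableOn_quantile (hX : Integrable id P) : IntegrableOn (quantile P) (Ioo 0 1) := by
  rw [← map_quantile_volume_Ioo (P := P)] at hX
  exact (integrable_map_measure aestronglyMeasurable_id aemeasurable_quantile).1 hX

end ProbabilityTheory

open ProbabilityTheory

theorem stmt_4 (P : Measure ℝ) [IsProbabilityMeasure P]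
    (hX : Integrable id P)
    (F : ℝ → ℝ) (hF : ∀ x, F x = (P (Set.Iic x)).toReal)
    (Finv : ℝ → ℝ) (hFinv : ∀ u, Finv u = sInf {x : ℝ | u ≤ F x})
    (μ : ℕ → ℝ)
    (hμ : ∀ j : ℕ, 1 ≤ j →
      μ j = (j : ℝ) * ∫ u in Set.Ioo (0 : ℝ) 1, u ^ (j - 1) * Finv u) :
    (∀ k : ℕ, 1 ≤ k →
        ∫ u in Set.Ioo (0 : ℝ) 1, (1 - u) ^ (k - 1) * Finv u
          = -(1 / (k : ℝ)) * ∑ j ∈ Finset.Icc 1 k, (-1 : ℝ) ^ j * (k.choose j : ℝ) * μ j)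
      ∧ Filter.Tendsto
          (fun k : ℕ => (∑ j ∈ Finset.Icc 1 k, (-1 : ℝ) ^ j * (k.choose j : ℝ) * μ j) / k)
          Filter.atTop (nhds 0) := by
  obtain rfl : Finv = quantile P := funext fun u => by
    simp only [hFinv, hF, quantile, cdf_eq_real, measureReal_def]
  have hq : Integrable (quantile P) (volume.restrict (Ioo 0 1)) := integrableOn_quantile hX
  have hu : ∀ᵐ u ∂volume.restrict (Ioo (0 : ℝ) 1), |u| ≤ 1 :=
    (ae_restrict_mem measurableSet_Ioo).mono fun u hu => abs_le.2 ⟨by linarith [hu.1], hu.2.le⟩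
  have hu' : ∀ᵐ u ∂volume.restrict (Ioo (0 : ℝ) 1), |1 - u| < 1 :=
    (ae_restrict_mem measurableSet_Ioo).mono fun u hu =>
      abs_lt.2 ⟨by linarith [hu.2], by linarith [hu.1]⟩
  have hexpand : ∀ k : ℕ, 1 ≤ k → ∫ u in Ioo 0 1, (1 - u) ^ (k - 1) * quantile P u
      = -(1 / (k : ℝ)) * ∑ j ∈ Finset.Icc 1 k, (-1 : ℝ) ^ j * (k.choose j : ℝ) * μ j := by
    intro k hk
    obtain ⟨n, rfl⟩ := Nat.exists_eq_add_of_le' hk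
    rw [Nat.add_sub_cancel,
      integral_one_sub_pow_mul (hq.pow_mul_of_abs_le_one (g := fun u => u) (by fun_prop) hu),
      sum_range_neg_one_pow_choose_mul]
    congr 1
    exact Finset.sum_congr rfl fun j hj => by rw [hμ j (Finset.mem_Icc.1 hj).1]
  refine ⟨hexpand, ?_⟩
  have hlim := ((tendsto_integral_pow_mul_of_abs_lt_one hq (g := fun u => 1 - u) (by fun_prop)
    hu').comp (tendsto_sub_atTop_nat 1)).neg
  rw [neg_zero] at hlim
  refine hlim.congr' ?_
  filter_upwards [eventually_ge_atTop 1] with k hk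
  rw [Function.comp_apply, hexpand k hk]
  field_simp
end

section
/- Define β_{i,n} = (n!/((i−1)!(n−i)!)) Σ_{j=0}^{n−i} C(n−i,j) (−1)^j μ_{i+j}/(i+j) for a real sequence {μ_k} and 1 ≤ i ≤ n. Then for every n ≥ 2 and 1 ≤ i ≤ n−1, β_{i+1,n} − β_{i,n} = C(n,i) (−1)^{n−i+1} Δ^{n−i} μ_i. -/
/-!
Write `n = i + m` with `m ≥ 1`. Since `n!/((i-1)!(n-i)!) = i·C(n,i)`, the coefficient of `μ (i+k)`
in `β_{i,n}` is `C(n,i) C(m,k) (-1)^k · i/(i+k)`. Shifting the summation index and using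
`(i+1) C(n,i+1) = m C(n,i)` and `m C(m-1,k-1) = k C(m,k)`, the coefficient of `μ (i+k)` in
`β_{i+1,n}` is `C(n,i) C(m,k) (-1)^(k+1) · k/(i+k)`. The difference is
`C(n,i) C(m,k) (-1)^(k+1)`, which is the binomial expansion of `C(n,i) (-1)^(m+1) Δ^m μ_i`.
-/

open Finset

/-- Forward difference operator: `fdiff f k = f (k+1) - f k`. -/
def fdiff (f : ℕ → ℝ) : ℕ → ℝ := fun k => f (k + 1) - f k

lemma neg_one_pow_succ_mul_fdiff_iter (μ : ℕ → ℝ) (m i : ℕ) :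
    (-1 : ℝ) ^ (m + 1) * fdiff^[m] μ i
      = ∑ k ∈ range (m + 1), (m.choose k : ℝ) * (-1) ^ (k + 1) * μ (i + k) := by
  rw [show fdiff = fwdDiff 1 from rfl, fwdDiff_iter_eq_sum_shift, mul_sum]
  refine sum_congr rfl fun k hk => ?_
  obtain ⟨d, rfl⟩ := Nat.exists_eq_add_of_le (Nat.lt_succ_iff.mp (mem_range.mp hk))
  have hsign : (-1 : ℝ) ^ (k + d + 1) * (-1) ^ (k + d - k) = (-1) ^ (k + 1) := by
    rw [Nat.add_sub_cancel_left, ← pow_add, show k + d + 1 + d = k + 1 + 2 * d by ring, pow_add,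
      pow_mul, neg_one_sq, one_pow, mul_one]
  simp only [smul_eq_mul, zsmul_eq_mul, Int.cast_mul, Int.cast_pow, Int.cast_neg, Int.cast_one,
    Int.cast_natCast, mul_one]
  rw [← hsign]
  ring

lemma factorial_div_factorial_pred_mul_factorial_sub {i n : ℕ} (hi : 1 ≤ i) (hin : i ≤ n) :
    (n.factorial : ℝ) / ((i - 1).factorial * (n - i).factorial) = i * n.choose i := by
  obtain ⟨i, rfl⟩ := Nat.exists_eq_add_of_le' hi
  have h := Nat.choose_mul_factorial_mul_factorial hin
  rw [Nat.factorial_succ] at h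
  rw [Nat.add_sub_cancel, div_eq_iff (by positivity)]
  exact_mod_cast (by rw [← h]; ring :
    n.factorial = (i + 1) * n.choose (i + 1) * (i.factorial * (n - (i + 1)).factorial))

lemma succ_mul_choose_mul_sum_shift (μ : ℕ → ℝ) (i m : ℕ) :
    ((i + 1 : ℕ) : ℝ) * (i + (m + 1)).choose (i + 1) *
        ∑ j ∈ range (m + 1), (m.choose j : ℝ) * (-1) ^ j / (((i + 1 : ℕ) : ℝ) + j) * μ (i + 1 + j)
      = (i + (m + 1)).choose i *
        ∑ k ∈ range (m + 2), ((m + 1).choose k : ℝ) * (-1) ^ (k + 1) * (k / (i + k)) * μ (i + k) := by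
  rw [sum_range_succ' _ (m + 1)]
  simp only [CharP.cast_eq_zero, zero_div, mul_zero, zero_mul, add_zero]
  rw [mul_sum, mul_sum]
  refine sum_congr rfl fun j _ => ?_
  have hchoose : (i + 1) * (i + (m + 1)).choose (i + 1) * m.choose j
      = (i + (m + 1)).choose i * (m + 1).choose (j + 1) * (j + 1) := by
    have h := Nat.choose_succ_right_eq (i + (m + 1)) i
    rw [show i + (m + 1) - i = m + 1 by omega] at h
    rw [mul_comm (i + 1), h, mul_assoc, Nat.add_one_mul_choose_eq, mul_assoc]
  calc ((i + 1 : ℕ) : ℝ) * (i + (m + 1)).choose (i + 1) *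
        ((m.choose j : ℝ) * (-1) ^ j / (((i + 1 : ℕ) : ℝ) + j) * μ (i + 1 + j))
      = ((i + 1) * (i + (m + 1)).choose (i + 1) * m.choose j : ℕ) * (-1) ^ j / (i + (j + 1))
          * μ (i + (j + 1)) := by rw [show i + 1 + j = i + (j + 1) by ring]; push_cast; ring
    _ = ((i + (m + 1)).choose i * (m + 1).choose (j + 1) * (j + 1) : ℕ) * (-1) ^ j / (i + (j + 1))
          * μ (i + (j + 1)) := by rw [hchoose]
    _ = _ := by push_cast; ring

theorem stmt_5 (μ : ℕ → ℝ) (β : ℕ → ℕ → ℝ)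
    (hβ : ∀ i n : ℕ, β i n =
      (Nat.factorial n : ℝ) / ((Nat.factorial (i - 1) : ℝ) * (Nat.factorial (n - i) : ℝ))
        * ∑ j ∈ Finset.range (n - i + 1),
            ((n - i).choose j : ℝ) * (-1 : ℝ) ^ j / ((i : ℝ) + j) * μ (i + j)) :
    ∀ n i : ℕ, 2 ≤ n → 1 ≤ i → i ≤ n - 1 →
      β (i + 1) n - β i n
        = (n.choose i : ℝ) * (-1 : ℝ) ^ (n - i + 1) * fdiff^[n - i] μ i := by
  intro n i _ hi hin
  rw [hβ, hβ, factorial_div_factorial_pred_mul_factorial_sub (by omega) (by omega),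
    factorial_div_factorial_pred_mul_factorial_sub hi (by omega)]
  obtain ⟨m, rfl⟩ : ∃ m, n = i + (m + 1) := ⟨n - i - 1, by omega⟩
  simp only [show i + (m + 1) - (i + 1) = m by omega, Nat.add_sub_cancel_left]
  rw [succ_mul_choose_mul_sum_shift, mul_assoc _ ((-1 : ℝ) ^ _), neg_one_pow_succ_mul_fdiff_iter,
    mul_comm (i : ℝ), mul_assoc, ← mul_sub]
  congr 1
  rw [mul_sum, ← sum_sub_distrib]
  refine sum_congr rfl fun k _ => ?_
  have hik : (i : ℝ) + k ≠ 0 := by positivity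
  field_simp
  ring
end

section
/- Let μ_1, μ_2 be finite measures on (0,∞) and g_i(x) = ∫ (e^y/(1−e^{−y}))(s_i(y) − e^{−xy}) dμ_i(y) (i = 1,2) be well-defined for x ≥ 1. If g_1(k) − g_2(k) is a constant c for all positive integers k, then μ_1 = μ_2 (and hence g_1(x) − g_2(x) = c for all x ≥ 1). -/
/-!
With `h₀(y) = e^y / (1 - e^{-y})`, the difference of kernels at `x + 1` and `x` is
`h₀(y) (e^{-xy} - e^{-(x+1)y}) = e^{-(x-1)y}`: the functions `s_i` cancel and the singular factor
`1 - e^{-y}` is absorbed. Hence `g_i(n + 2) - g_i(n + 1) = ∫ e^{-ny} dμ_i`, so the hypothesis says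
that `μ₁` and `μ₂` have the same Laplace transform at every natural number. Pushed forward by
`u = e^{-y}` these become equal moments of two finite measures on `[0, 1]`, and by Weierstrass
approximation polynomials are dense in the continuous functions there, so the measures agree.
Once `μ₁ = μ₂`, `g₁ x - g₂ x = ∫ h₀ (s₁ - s₂) dμ₁` does not depend on `x`.
-/

open MeasureTheory Real

lemma Continuous.integrable_of_ae_mem_compact {X E : Type*} [TopologicalSpace X] [T2Space X]
    [MeasurableSpace X] [OpensMeasurableSpace X] [NormedAddCommGroup E] {μ : Measure X}
    [IsFiniteMeasure μ] {K : Set X} (hK : IsCompact K) (hμK : ∀ᵐ x ∂μ, x ∈ K) {f : X → E}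
    (hf : Continuous f) :
    Integrable f μ := by
  simpa only [IntegrableOn, Measure.restrict_eq_self_of_ae_mem hμK] using
    hf.continuousOn.integrableOn_compact (μ := μ) hK

lemma integral_polynomial_eval_eq_of_integral_pow_eq {μ ν : Measure ℝ}
    [IsFiniteMeasure μ] [IsFiniteMeasure ν] {a b : ℝ}
    (hμ : ∀ᵐ x ∂μ, x ∈ Set.Icc a b) (hν : ∀ᵐ x ∂ν, x ∈ Set.Icc a b)
    (h : ∀ n : ℕ, ∫ x, x ^ n ∂μ = ∫ x, x ^ n ∂ν) (p : Polynomial ℝ) :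
    ∫ x, p.eval x ∂μ = ∫ x, p.eval x ∂ν := by
  have hint : ∀ {m : Measure ℝ} [IsFiniteMeasure m], (∀ᵐ x ∂m, x ∈ Set.Icc a b) →
      ∀ q : Polynomial ℝ, Integrable (fun x => q.eval x) m :=
    fun hm q => q.continuous.integrable_of_ae_mem_compact isCompact_Icc hm
  induction p using Polynomial.induction_on' with
  | add p q hp hq =>
    simp only [Polynomial.eval_add]
    rw [integral_add (hint hμ p) (hint hμ q), integral_add (hint hν p) (hint hν q), hp, hq]
  | monomial n c =>
    simp only [Polynomial.eval_monomial, integral_const_mul, h n]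

theorem MeasureTheory.Measure.ext_of_integral_pow_eq_of_ae_mem_Icc {μ ν : Measure ℝ}
    [IsFiniteMeasure μ] [IsFiniteMeasure ν] {a b : ℝ}
    (hμ : ∀ᵐ x ∂μ, x ∈ Set.Icc a b) (hν : ∀ᵐ x ∂ν, x ∈ Set.Icc a b)
    (h : ∀ n : ℕ, ∫ x, x ^ n ∂μ = ∫ x, x ^ n ∂ν) :
    μ = ν := by
  refine ext_of_forall_integral_eq_of_IsFiniteMeasure fun f => eq_of_forall_dist_le fun ε hε => ?_
  set M := μ.real Set.univ + ν.real Set.univ + 1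
  have hM : 0 < M := by positivity
  obtain ⟨p, hp⟩ := exists_polynomial_near_of_continuousOn a b f f.continuous.continuousOn
    (ε / M) (by positivity)
  have happrox : ∀ {m : Measure ℝ} [IsFiniteMeasure m], (∀ᵐ x ∂m, x ∈ Set.Icc a b) →
      dist (∫ x, f x ∂m) (∫ x, p.eval x ∂m) ≤ ε / M * m.real Set.univ := by
    intro m _ hm
    rw [dist_eq_norm, ← integral_sub (f.integrable m)
      (p.continuous.integrable_of_ae_mem_compact isCompact_Icc hm)]
    refine norm_integral_le_of_norm_le_const ?_
    filter_upwards [hm] with x hx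
    rw [Real.norm_eq_abs, abs_sub_comm]
    exact (hp x hx).le
  calc dist (∫ x, f x ∂μ) (∫ x, f x ∂ν)
      ≤ dist (∫ x, f x ∂μ) (∫ x, p.eval x ∂μ) + dist (∫ x, f x ∂ν) (∫ x, p.eval x ∂ν) := by
        rw [integral_polynomial_eval_eq_of_integral_pow_eq hμ hν h p]
        exact dist_triangle_right _ _ _
    _ ≤ ε / M * (μ.real Set.univ + ν.real Set.univ) := by
        rw [mul_add]; exact add_le_add (happrox hμ) (happrox hν)
    _ ≤ ε := by
        rw [div_mul_eq_mul_div, div_le_iff₀ hM]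
        exact mul_le_mul_of_nonneg_left (by linarith) hε.le

theorem MeasureTheory.Measure.ext_of_integral_exp_neg_nat_mul_eq {μ ν : Measure ℝ}
    [IsFiniteMeasure μ] [IsFiniteMeasure ν]
    (hμ : ∀ᵐ y ∂μ, 0 ≤ y) (hν : ∀ᵐ y ∂ν, 0 ≤ y)
    (h : ∀ n : ℕ, ∫ y, exp (-(n * y)) ∂μ = ∫ y, exp (-(n * y)) ∂ν) :
    μ = ν := by
  have he : MeasurableEmbedding fun y : ℝ => exp (-y) :=
    (continuous_exp.comp continuous_neg).measurableEmbedding (exp_injective.comp neg_injective)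
  have hmem : ∀ {m : Measure ℝ}, (∀ᵐ y ∂m, 0 ≤ y) →
      ∀ᵐ x ∂(m.map fun y => exp (-y)), x ∈ Set.Icc 0 1 := by
    intro m hm
    rw [he.ae_map_iff]
    filter_upwards [hm] with y hy
    exact ⟨(exp_pos _).le, exp_le_one_iff.mpr (neg_nonpos.mpr hy)⟩
  refine he.map_injective (Measure.ext_of_integral_pow_eq_of_ae_mem_Icc (hmem hμ) (hmem hν)
    fun n => ?_)
  simp only [he.integral_map, ← exp_nat_mul, mul_neg]
  exact h n

noncomputable def laplaceKernel (s x y : ℝ) : ℝ := exp y / (1 - exp (-y)) * (s - exp (-(x * y)))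

lemma laplaceKernel_add_one_sub (s x : ℝ) {y : ℝ} (hy : y ≠ 0) :
    laplaceKernel s (x + 1) y - laplaceKernel s x y = exp (-((x - 1) * y)) := by
  have hd : 1 - exp (-y) ≠ 0 :=
    sub_ne_zero.mpr (Ne.symm <| (exp_eq_one_iff _).not.mpr (neg_ne_zero.mpr hy))
  have h_succ : exp (-((x + 1) * y)) = exp (-(x * y)) * exp (-y) := by rw [← exp_add]; ring_nf
  have h_pred : exp (-((x - 1) * y)) = exp y * exp (-(x * y)) := by rw [← exp_add]; ring_nf
  unfold laplaceKernel
  rw [← mul_sub, sub_sub_sub_cancel_left, h_succ, h_pred]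
  field_simp

lemma integral_exp_neg_mul_eq_sub {μ : Measure ℝ} (hμ : ∀ᵐ y ∂μ, 0 < y) {s g : ℝ → ℝ}
    (hint : ∀ x : ℝ, 1 ≤ x → Integrable (fun y => laplaceKernel (s y) x y) μ)
    (hg : ∀ x : ℝ, 1 ≤ x → g x = ∫ y, laplaceKernel (s y) x y ∂μ) {x : ℝ} (hx : 0 ≤ x) :
    ∫ y, exp (-(x * y)) ∂μ = g (x + 2) - g (x + 1) := by
  have h1 : 1 ≤ x + 1 := by linarith
  have h2 : 1 ≤ x + 2 := by linarith
  rw [hg _ h1, hg _ h2, ← integral_sub (hint _ h2) (hint _ h1)]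
  refine integral_congr_ae ?_
  filter_upwards [hμ] with y hy
  rw [show x + 2 = x + 1 + 1 by ring, laplaceKernel_add_one_sub _ _ hy.ne', add_sub_cancel_right]

theorem stmt_9 (μ₁ μ₂ : Measure ℝ) [IsFiniteMeasure μ₁] [IsFiniteMeasure μ₂]
    (hs₁ : μ₁ (Set.Iic 0) = 0) (hs₂ : μ₂ (Set.Iic 0) = 0)
    (s₁ s₂ g₁ g₂ : ℝ → ℝ)
    (hint₁ : ∀ x : ℝ, 1 ≤ x →
      Integrable (fun y => Real.exp y / (1 - Real.exp (-y)) * (s₁ y - Real.exp (-(x * y)))) μ₁)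
    (hint₂ : ∀ x : ℝ, 1 ≤ x →
      Integrable (fun y => Real.exp y / (1 - Real.exp (-y)) * (s₂ y - Real.exp (-(x * y)))) μ₂)
    (hg₁ : ∀ x : ℝ, 1 ≤ x →
      g₁ x = ∫ y, Real.exp y / (1 - Real.exp (-y)) * (s₁ y - Real.exp (-(x * y))) ∂μ₁)
    (hg₂ : ∀ x : ℝ, 1 ≤ x →
      g₂ x = ∫ y, Real.exp y / (1 - Real.exp (-y)) * (s₂ y - Real.exp (-(x * y))) ∂μ₂)
    (c : ℝ) (hc : ∀ k : ℕ, 1 ≤ k → g₁ k - g₂ k = c) :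
    μ₁ = μ₂ ∧ ∀ x : ℝ, 1 ≤ x → g₁ x - g₂ x = c := by
  have hpos : ∀ {μ : Measure ℝ}, μ (Set.Iic 0) = 0 → ∀ᵐ y ∂μ, 0 < y := fun h =>
    (measure_eq_zero_iff_ae_notMem.mp h).mono fun _ hy => not_le.mp hy
  have hlaplace : ∀ n : ℕ, ∫ y, exp (-(n * y)) ∂μ₁ = ∫ y, exp (-(n * y)) ∂μ₂ := by
    intro n
    rw [integral_exp_neg_mul_eq_sub (hpos hs₁) hint₁ hg₁ n.cast_nonneg,
      integral_exp_neg_mul_eq_sub (hpos hs₂) hint₂ hg₂ n.cast_nonneg, sub_eq_sub_iff_sub_eq_sub]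
    have h2 := hc (n + 2) (by omega)
    have h1 := hc (n + 1) (by omega)
    push_cast at h1 h2
    rw [h1, h2]
  have hμ : μ₁ = μ₂ := Measure.ext_of_integral_exp_neg_nat_mul_eq
    ((hpos hs₁).mono fun _ => le_of_lt) ((hpos hs₂).mono fun _ => le_of_lt) hlaplace
  subst hμ
  have hdiff : ∀ x : ℝ, 1 ≤ x → g₁ x - g₂ x = ∫ y, exp y / (1 - exp (-y)) * (s₁ y - s₂ y) ∂μ₁ := by
    intro x hx
    rw [hg₁ x hx, hg₂ x hx, ← integral_sub (hint₁ x hx) (hint₂ x hx)]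
    congr 1 with y
    ring
  refine ⟨rfl, fun x hx => ?_⟩
  rw [hdiff x hx, ← hdiff 1 le_rfl]
  exact_mod_cast hc 1 le_rfl
end

section
/- Let X be an integrable random variable with distribution function F, and let ρ_k = E[range of k iid copies of X] = ∫_ℝ [1 − F(x)^k − (1−F(x))^k] dx. Then ρ_k = Σ_{j=1}^k (−1)^j C(k,j) ρ_j for all k ≥ 1, and (−1)^{s+1} Δ^s ρ_k = ∫_ℝ [F^k(1−F)^s + F^s(1−F)^k] dx > 0 for a non-degenerate X and all k, s ≥ 1. -/
/-!
Write `a = F x`. The first claim is the binomial theorem applied to `(1 - 1)^k`, `(1 - a)^k` and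
`(1 - (1 - a))^k`, integrated in `x`. For the second, the difference in `k` of
`a^k (1-a)^s + a^s (1-a)^k` is `-(a^k (1-a)^(s+1) + a^(s+1) (1-a)^k)`, so induction on `s` gives the
iterated differences. All integrands are dominated by multiples of `F (1 - F)`, and
`F x (1 - F x) ≤ P(|X| ≥ |x|)`, whose integral over `x` is `2 E|X|` by Tonelli. For positivity, a
non-degenerate law has `0 < F u < 1` at some `u`, and right-continuity keeps `F` inside `(0, 1)`
on some interval `[u, v)`.
-/

open MeasureTheory

section Binomial

open Finset

theorem sum_range_neg_one_pow_mul_choose_mul_pow {R : Type*} [CommRing R] (x : R) (k : ℕ) :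
    ∑ j ∈ range (k + 1), (-1) ^ j * (k.choose j : R) * x ^ j = (1 - x) ^ k := by
  rw [sub_eq_neg_add, add_pow]
  refine sum_congr rfl fun j _ => ?_
  rw [neg_pow, one_pow]
  ring

theorem sum_Icc_neg_one_pow_mul_choose_mul_one_sub_pow_sub_pow {R : Type*} [CommRing R]
    (a : R) {k : ℕ} (hk : 1 ≤ k) :
    ∑ j ∈ Icc 1 k, (-1) ^ j * (k.choose j : R) * (1 - a ^ j - (1 - a) ^ j)
      = 1 - a ^ k - (1 - a) ^ k := by
  have hsum : ∑ j ∈ range (k + 1), (-1) ^ j * (k.choose j : R) * (1 - a ^ j - (1 - a) ^ j)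
      = (1 - 1) ^ k - (1 - a) ^ k - (1 - (1 - a)) ^ k := by
    simp only [← sum_range_neg_one_pow_mul_choose_mul_pow, ← sum_sub_distrib, one_pow]
    refine sum_congr rfl fun j _ => by ring
  rw [range_eq_Ico, sum_eq_sum_Ico_succ_bot (by omega : 0 < k + 1), zero_add,
    Ico_add_one_right_eq_Icc, sub_self, zero_pow (by omega), sub_sub_cancel] at hsum
  simp only [pow_zero, Nat.choose_zero_right] at hsum
  linear_combination hsum

end Binomial

open ProbabilityTheory Set Filter
open scoped ENNReal

section UnitIntervalValued

variable {F : ℝ → ℝ}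

theorem pow_mul_one_sub_pow_le_mul_one_sub {a : ℝ} (ha0 : 0 ≤ a) (ha1 : a ≤ 1) {m n : ℕ}
    (hm : 1 ≤ m) (hn : 1 ≤ n) : a ^ m * (1 - a) ^ n ≤ a * (1 - a) :=
  mul_le_mul (pow_le_of_le_one ha0 ha1 (by omega))
    (pow_le_of_le_one (by linarith) (by linarith) (by omega)) (by bound) ha0

theorem integrable_pow_mul_one_sub_pow (hFm : Measurable F) (hF0 : ∀ x, 0 ≤ F x)
    (hF1 : ∀ x, F x ≤ 1) (hF : Integrable fun x => F x * (1 - F x)) {m n : ℕ}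
    (hm : 1 ≤ m) (hn : 1 ≤ n) : Integrable fun x => F x ^ m * (1 - F x) ^ n := by
  refine hF.mono' (by fun_prop) (ae_of_all _ fun x => ?_)
  rw [Real.norm_of_nonneg (mul_nonneg (pow_nonneg (hF0 x) m) (pow_nonneg (by linarith [hF1 x]) n))]
  exact pow_mul_one_sub_pow_le_mul_one_sub (hF0 x) (hF1 x) hm hn

theorem integrable_pow_mul_one_sub_pow_add (hFm : Measurable F) (hF0 : ∀ x, 0 ≤ F x)
    (hF1 : ∀ x, F x ≤ 1) (hF : Integrable fun x => F x * (1 - F x)) {k s : ℕ}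
    (hk : 1 ≤ k) (hs : 1 ≤ s) :
    Integrable fun x => F x ^ k * (1 - F x) ^ s + F x ^ s * (1 - F x) ^ k :=
  (integrable_pow_mul_one_sub_pow hFm hF0 hF1 hF hk hs).add
    (integrable_pow_mul_one_sub_pow hFm hF0 hF1 hF hs hk)

theorem integrable_one_sub_pow_sub_one_sub_pow (hFm : Measurable F) (hF0 : ∀ x, 0 ≤ F x)
    (hF1 : ∀ x, F x ≤ 1) (hF : Integrable fun x => F x * (1 - F x)) {k : ℕ} (hk : 1 ≤ k) :
    Integrable fun x => 1 - F x ^ k - (1 - F x) ^ k := by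
  induction k, hk using Nat.le_induction with
  | base =>
    refine (integrable_zero ℝ ℝ volume).congr (ae_of_all _ fun x => ?_)
    simp only [Pi.zero_apply]
    ring
  | succ k hk ih =>
    refine (ih.add ((integrable_pow_mul_one_sub_pow hFm hF0 hF1 hF hk le_rfl).add
      (integrable_pow_mul_one_sub_pow hFm hF0 hF1 hF le_rfl hk))).congr (ae_of_all _ fun x => ?_)
    simp only [Pi.add_apply]
    ring

theorem fdiff_iterate_eq_neg_one_pow_mul_integral (hFm : Measurable F) (hF0 : ∀ x, 0 ≤ F x)
    (hF1 : ∀ x, F x ≤ 1) (hF : Integrable fun x => F x * (1 - F x)) {ρ : ℕ → ℝ}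
    (hρ : ∀ k : ℕ, 1 ≤ k → ρ k = ∫ x, (1 - F x ^ k - (1 - F x) ^ k)) {s : ℕ} (hs : 1 ≤ s) :
    ∀ k : ℕ, 1 ≤ k → fdiff^[s] ρ k
      = (-1) ^ (s + 1) * ∫ x, (F x ^ k * (1 - F x) ^ s + F x ^ s * (1 - F x) ^ k) := by
  induction s, hs using Nat.le_induction with
  | base =>
    intro k hk
    rw [Function.iterate_one, fdiff, hρ (k + 1) (by omega), hρ k hk,
      ← integral_sub (integrable_one_sub_pow_sub_one_sub_pow hFm hF0 hF1 hF (by omega))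
        (integrable_one_sub_pow_sub_one_sub_pow hFm hF0 hF1 hF hk)]
    simp only [Nat.reduceAdd, neg_one_sq, one_mul]
    congr 1 with x
    ring
  | succ s hs ih =>
    intro k hk
    rw [Function.iterate_succ_apply', fdiff, ih (k + 1) (by omega), ih k hk, ← mul_sub,
      ← integral_sub (integrable_pow_mul_one_sub_pow_add hFm hF0 hF1 hF (by omega) hs)
        (integrable_pow_mul_one_sub_pow_add hFm hF0 hF1 hF hk hs), pow_succ _ (s + 1), mul_assoc,
      neg_one_mul, ← integral_neg]
    congr 2 with x
    ring

theorem eq_sum_Icc_neg_one_pow_mul_choose_mul (hFm : Measurable F) (hF0 : ∀ x, 0 ≤ F x)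
    (hF1 : ∀ x, F x ≤ 1) (hF : Integrable fun x => F x * (1 - F x)) {ρ : ℕ → ℝ}
    (hρ : ∀ k : ℕ, 1 ≤ k → ρ k = ∫ x, (1 - F x ^ k - (1 - F x) ^ k)) {k : ℕ} (hk : 1 ≤ k) :
    ρ k = ∑ j ∈ Finset.Icc 1 k, (-1 : ℝ) ^ j * (k.choose j : ℝ) * ρ j := by
  have hint : ∀ j ∈ Finset.Icc 1 k, Integrable fun x => (-1 : ℝ) ^ j * (k.choose j : ℝ) *
      (1 - F x ^ j - (1 - F x) ^ j) := fun j hj =>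
    (integrable_one_sub_pow_sub_one_sub_pow hFm hF0 hF1 hF (Finset.mem_Icc.1 hj).1).const_mul _
  simp_rw [hρ k hk, ← sum_Icc_neg_one_pow_mul_choose_mul_one_sub_pow_sub_pow (F _) hk,
    integral_finsetSum _ hint, integral_const_mul]
  exact Finset.sum_congr rfl fun j hj => by rw [hρ j (Finset.mem_Icc.1 hj).1]

theorem integral_pow_mul_one_sub_pow_add_pos (hFm : Measurable F) (hF0 : ∀ x, 0 ≤ F x)
    (hF1 : ∀ x, F x ≤ 1) (hF : Integrable fun x => F x * (1 - F x)) (hmono : Monotone F)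
    {u : ℝ} (hu : F u ∈ Ioo 0 1) (hcont : ContinuousWithinAt F (Ici u) u) {k s : ℕ}
    (hk : 1 ≤ k) (hs : 1 ≤ s) :
    0 < ∫ x, (F x ^ k * (1 - F x) ^ s + F x ^ s * (1 - F x) ^ k) := by
  obtain ⟨v, huv, hlt⟩ :=
    mem_nhdsGE_iff_exists_Ico_subset.1 (hcont.eventually (gt_mem_nhds hu.2))
  have hsupp : Ioo u v ⊆ Function.support
      fun x => F x ^ k * (1 - F x) ^ s + F x ^ s * (1 - F x) ^ k := fun x hx => by
    have h0 : 0 < F x := hu.1.trans_le (hmono hx.1.le)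
    have h1 : 0 < 1 - F x := sub_pos.2 (hlt (Ioo_subset_Ico_self hx))
    exact (by positivity : (0 : ℝ) < _).ne'
  refine (integral_pos_iff_support_of_nonneg (fun x => ?_)
    (integrable_pow_mul_one_sub_pow_add hFm hF0 hF1 hF hk hs)).2
    (((Measure.measure_Ioo_pos volume).2 huv).trans_le (measure_mono hsupp))
  have h1 : 0 ≤ 1 - F x := by linarith [hF1 x]
  have h0 := hF0 x
  positivity

end UnitIntervalValued

theorem lintegral_measure_abs_le_abs_lt_top {P : Measure ℝ} [SFinite P] (hX : Integrable id P) :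
    ∫⁻ x, P {ω | |x| ≤ |ω|} < ∞ := by
  have hS : MeasurableSet {p : ℝ × ℝ | |p.1| ≤ |p.2|} :=
    measurableSet_le (by fun_prop) (by fun_prop)
  have hball (ω : ℝ) : {x : ℝ | |x| ≤ |ω|} = Metric.closedBall 0 |ω| := by
    ext x; simp
  calc ∫⁻ x, P {ω | |x| ≤ |ω|}
      = volume.prod P {p : ℝ × ℝ | |p.1| ≤ |p.2|} := (Measure.prod_apply hS).symm
    _ = ∫⁻ ω, ENNReal.ofReal (2 * |ω|) ∂P := by
        rw [Measure.prod_apply_symm hS]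
        exact lintegral_congr fun ω => by rw [← Real.volume_closedBall 0, ← hball]; rfl
    _ < ∞ := (hX.abs.const_mul 2).lintegral_lt_top

theorem ofReal_cdf_mul_one_sub_cdf_le (P : Measure ℝ) [IsProbabilityMeasure P] (x : ℝ) :
    ENNReal.ofReal (cdf P x * (1 - cdf P x)) ≤ P {ω | |x| ≤ |ω|} := by
  have hF0 := cdf_nonneg P x
  have hF1 := cdf_le_one P x
  rcases le_or_gt 0 x with hx | hx
  · have htail : ENNReal.ofReal (1 - cdf P x) = P (Ioi x) := by
      rw [cdf_eq_real, ← probReal_compl_eq_one_sub measurableSet_Iic, compl_Iic,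
        ofReal_measureReal]
    calc ENNReal.ofReal (cdf P x * (1 - cdf P x)) ≤ ENNReal.ofReal (1 - cdf P x) :=
          ENNReal.ofReal_le_ofReal (mul_le_of_le_one_left (by linarith) hF1)
      _ ≤ P {ω | |x| ≤ |ω|} := htail ▸ measure_mono fun ω (hω : x < ω) => by
          show |x| ≤ |ω|
          rw [abs_of_nonneg hx, abs_of_pos (hx.trans_lt hω)]
          exact hω.le
  · calc ENNReal.ofReal (cdf P x * (1 - cdf P x)) ≤ ENNReal.ofReal (cdf P x) :=
          ENNReal.ofReal_le_ofReal (mul_le_of_le_one_right hF0 (by linarith))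
      _ ≤ P {ω | |x| ≤ |ω|} := (ofReal_cdf P x).symm ▸ measure_mono fun ω (hω : ω ≤ x) => by
          show |x| ≤ |ω|
          rw [abs_of_neg hx, abs_of_neg (hω.trans_lt hx)]
          exact neg_le_neg hω

theorem integrable_cdf_mul_one_sub_cdf (P : Measure ℝ) [IsProbabilityMeasure P]
    (hX : Integrable id P) : Integrable fun x => cdf P x * (1 - cdf P x) := by
  have hnonneg (x : ℝ) : 0 ≤ cdf P x * (1 - cdf P x) :=
    mul_nonneg (cdf_nonneg P x) (by linarith [cdf_le_one P x])
  have hm : Measurable (cdf P) := (cdf P).mono.measurable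
  refine ⟨by fun_prop, (hasFiniteIntegral_iff_ofReal (ae_of_all _ hnonneg)).2 ?_⟩
  exact (lintegral_mono (ofReal_cdf_mul_one_sub_cdf_le P)).trans_lt
    (lintegral_measure_abs_le_abs_lt_top hX)

theorem exists_eq_dirac_of_cdf_eq_zero_or_one (P : Measure ℝ) [IsProbabilityMeasure P]
    (h : ∀ x, cdf P x = 0 ∨ cdf P x = 1) : ∃ c, P = Measure.dirac c := by
  set S := {x | cdf P x = 1}
  have hS_of_gt {x : ℝ} (hx : 1 / 2 < cdf P x) : x ∈ S := (h x).resolve_left (by linarith)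
  obtain ⟨x₁, hx₁⟩ := (tendsto_cdf_atTop P |>.eventually (lt_mem_nhds one_half_lt_one)).exists
  obtain ⟨x₀, hx₀⟩ := (tendsto_cdf_atBot P |>.eventually (gt_mem_nhds one_half_pos)).exists
  have hbdd : BddBelow S := ⟨x₀, fun x (hx : cdf P x = 1) => le_of_not_gt fun hlt => by
    linarith [monotone_cdf P hlt.le]⟩
  set c := sInf S
  have hS_of_gt_c {x : ℝ} (hx : c < x) : x ∈ S := by
    obtain ⟨y, hy, hyx⟩ := exists_lt_of_csInf_lt ⟨x₁, hS_of_gt hx₁⟩ hx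
    exact le_antisymm (cdf_le_one P x) (hy ▸ monotone_cdf P hyx.le)
  have hc : c ∈ S := by
    have hright := ((cdf P).right_continuous c).mono (Ioi_subset_Ici_self (a := c))
    exact tendsto_nhds_unique hright (tendsto_const_nhds.congr'
      (eventually_nhdsWithin_of_forall fun x hx => (hS_of_gt_c hx).symm))
  refine ⟨c, (Measure.cdf_eq_iff P (Measure.dirac c)).1 (StieltjesFunction.ext fun x => ?_)⟩
  rw [cdf_eq_real (Measure.dirac c), measureReal_def, Measure.dirac_apply' _ measurableSet_Iic]
  by_cases hcx : c ≤ x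
  · rw [indicator_of_mem (mem_Iic.2 hcx), Pi.one_apply, ENNReal.toReal_one]
    exact le_antisymm (cdf_le_one P x) (hc ▸ monotone_cdf P hcx)
  · rw [indicator_of_notMem (by simpa using hcx), ENNReal.toReal_zero]
    exact (h x).resolve_right fun hx => hcx (csInf_le hbdd hx)

theorem exists_cdf_mem_Ioo_of_forall_ne_dirac (P : Measure ℝ) [IsProbabilityMeasure P]
    (h : ∀ c, P ≠ Measure.dirac c) : ∃ u, cdf P u ∈ Ioo 0 1 := by
  by_contra! hne
  obtain ⟨c, hc⟩ := exists_eq_dirac_of_cdf_eq_zero_or_one P fun x => by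
    rcases (cdf_nonneg P x).eq_or_lt with h0 | h0
    · exact .inl h0.symm
    · exact .inr (le_antisymm (cdf_le_one P x) (not_lt.1 fun h1 => hne x ⟨h0, h1⟩))
  exact h c hc

theorem stmt_17 (P : Measure ℝ) [IsProbabilityMeasure P]
    (hX : Integrable id P)
    (F : ℝ → ℝ) (hF : ∀ x, F x = (P (Set.Iic x)).toReal)
    (ρ : ℕ → ℝ)
    (hρ : ∀ k : ℕ, 1 ≤ k → ρ k = ∫ x : ℝ, (1 - F x ^ k - (1 - F x) ^ k)) :
    (∀ k : ℕ, 1 ≤ k →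
        ρ k = ∑ j ∈ Finset.Icc 1 k, (-1 : ℝ) ^ j * (k.choose j : ℝ) * ρ j)
      ∧ ((∀ c : ℝ, P ≠ Measure.dirac c) → ∀ k s : ℕ, 1 ≤ k → 1 ≤ s →
          (-1 : ℝ) ^ (s + 1) * fdiff^[s] ρ k
            = (∫ x : ℝ, (F x ^ k * (1 - F x) ^ s + F x ^ s * (1 - F x) ^ k))
          ∧ 0 < (-1 : ℝ) ^ (s + 1) * fdiff^[s] ρ k) := by
  obtain rfl : F = cdf P := funext fun x => by rw [hF, cdf_eq_real, measureReal_def]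
  have hFm : Measurable (cdf P) := (cdf P).mono.measurable
  have hint := integrable_cdf_mul_one_sub_cdf P hX
  refine ⟨fun k hk => eq_sum_Icc_neg_one_pow_mul_choose_mul hFm (cdf_nonneg P) (cdf_le_one P)
    hint hρ hk, fun hnd k s hk hs => ?_⟩
  have heq : (-1 : ℝ) ^ (s + 1) * fdiff^[s] ρ k
      = ∫ x, (cdf P x ^ k * (1 - cdf P x) ^ s + cdf P x ^ s * (1 - cdf P x) ^ k) := by
    rw [fdiff_iterate_eq_neg_one_pow_mul_integral hFm (cdf_nonneg P) (cdf_le_one P) hint hρ hs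
      k hk, ← mul_assoc, ← mul_pow, neg_one_mul, neg_neg, one_pow, one_mul]
  obtain ⟨u, hu⟩ := exists_cdf_mem_Ioo_of_forall_ne_dirac P hnd
  exact ⟨heq, heq ▸ integral_pow_mul_one_sub_pow_add_pos hFm (cdf_nonneg P) (cdf_le_one P) hint
    (cdf P).mono hu ((cdf P).right_continuous u) hk hs⟩
end
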